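/- arXiv:1612.01663 — 2 statements merged into one kernel-verified Lean document; each statement's English description precedes it below -/
import Mathlib

section
/- There exists a universal constant c > 0 such that for every pair of positive integers m and d and every δ ∈ (0, 1/2), there is a probability measure μ on the space of real m × d matrices with the property that for every fixed vector x ∈ ℝ^d, the set of matrices A satisfying |‖Ax‖₂² − ‖x‖₂²| ≤ c·√(log(1/δ)/m)·‖x‖₂² has μ-measure at least 1 − δ. -/
/-!
Take `A` with independent `N(0, 1/m)` entries. For fixed `x` the coordinates `(Ax)ᵢ` are
independent `N(0, ‖x‖²/m)`, so `‖Ax‖²` is `‖x‖²/m` times a `χ²` variable with `m` degrees of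
freedom, whose moment generating function is `E exp(t ‖Ax‖²) = (1 - 2t‖x‖²/m)^(-m/2)`.
Since `(1 - s)^(-1/2) ≤ exp (s/2 + s²)` for `s ≤ 1/2`, Chernoff's bound with `s = ±ε/4` bounds
each tail `‖Ax‖² ≷ (1 ± ε)‖x‖²` by `exp (-mε²/16)`. For `ε = 8 √(log (1/δ) / m)` this is `δ⁴`,
and `2δ⁴ ≤ δ`. When `ε ≥ 1` the point mass at the zero matrix already works.
-/

open MeasureTheory Matrix
open scoped ENNReal

/-- The Euclidean norm of a real vector. -/
noncomputable def euclNorm {d : ℕ} (x : Fin d → ℝ) : ℝ := Real.sqrt (∑ i, x i ^ 2)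

open ProbabilityTheory Real
open scoped NNReal

lemma ProbabilityTheory.iIndepFun.map_sum_eq_gaussianReal {Ω ι : Type*} [MeasurableSpace Ω]
    {P : Measure Ω} [Fintype ι] {X : ι → Ω → ℝ} {μ : ι → ℝ} {v : ι → ℝ≥0}
    (hX : ∀ i, Measurable (X i)) (hindep : iIndepFun X P)
    (hlaw : ∀ i, P.map (X i) = gaussianReal (μ i) (v i)) :
    P.map (fun ω ↦ ∑ i, X i ω) = gaussianReal (∑ i, μ i) (∑ i, v i) := by
  have := hindep.isProbabilityMeasure
  refine Measure.ext_of_charFun ?_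
  rw [hindep.charFun_map_fun_sum_eq_prod (fun i ↦ (hX i).aemeasurable)]
  ext t
  simp only [Finset.prod_apply, hlaw, charFun_gaussianReal, ← Complex.exp_sum]
  push_cast
  simp only [Finset.sum_sub_distrib, Finset.sum_mul, Finset.mul_sum, Finset.sum_div]

lemma map_dotProduct_pi_gaussianReal {ι : Type*} [Fintype ι] (v : ℝ≥0) (x : ι → ℝ) :
    (Measure.pi fun _ : ι ↦ gaussianReal 0 v).map (· ⬝ᵥ x)
      = gaussianReal 0 ((∑ i, x i ^ 2).toNNReal * v) := by
  have hlaw (i : ι) : (Measure.pi fun _ : ι ↦ gaussianReal 0 v).map (fun g ↦ g i * x i)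
      = gaussianReal 0 (.mk (x i ^ 2) (sq_nonneg _) * v) := by
    have : (Measure.pi fun _ : ι ↦ gaussianReal 0 v).map (fun g ↦ g i * x i)
        = ((Measure.pi fun _ : ι ↦ gaussianReal 0 v).map (Function.eval i)).map (· * x i) := by
      rw [Measure.map_map (by fun_prop) (by fun_prop)]
      rfl
    rw [this, (measurePreserving_eval _ i).map_eq, gaussianReal_map_mul_const, mul_zero]
  have hindep := iIndepFun_pi (μ := fun _ : ι ↦ gaussianReal 0 v)
    fun i ↦ (measurable_id.mul_const (x i)).aemeasurable
  convert hindep.map_sum_eq_gaussianReal (fun i ↦ by fun_prop) hlaw using 2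
  · rfl
  · simp
  · rw [← Finset.sum_mul, Real.toNNReal_sum_of_nonneg fun i _ ↦ sq_nonneg (x i)]
    congr 2 with i
    simp [Real.toNNReal_of_nonneg (sq_nonneg (x i))]

lemma gaussianPDFReal_mul_exp_mul_sq {V : ℝ≥0} (hV : V ≠ 0) {t : ℝ} (ht : 2 * t * V < 1) (u : ℝ) :
    gaussianPDFReal 0 V u * exp (t * u ^ 2)
      = (√(1 - 2 * t * V))⁻¹ * gaussianPDFReal 0 (V / (1 - 2 * t * V)).toNNReal u := by
  have h1 : 0 < 1 - 2 * t * V := by linarith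
  rw [gaussianPDFReal, gaussianPDFReal, Real.coe_toNNReal _ (by positivity), mul_assoc,
    ← Real.exp_add, ← mul_assoc, ← mul_inv, ← Real.sqrt_mul h1.le]
  congr 3
  · field_simp
    exact (div_self (by linarith)).symm
  · field_simp
    ring

lemma lintegral_exp_mul_sq_gaussianReal (V : ℝ≥0) {t : ℝ} (ht : 2 * t * V < 1) :
    ∫⁻ u, ENNReal.ofReal (exp (t * u ^ 2)) ∂gaussianReal 0 V
      = ENNReal.ofReal (√(1 - 2 * t * V))⁻¹ := by
  rcases eq_or_ne V 0 with rfl | hV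
  · simp [gaussianReal_zero_var]
  have hW : (V / (1 - 2 * t * V)).toNNReal ≠ 0 := by
    have : (0 : ℝ) < V := by positivity
    have : 0 < 1 - 2 * t * V := by linarith
    positivity
  rw [gaussianReal_of_var_ne_zero 0 hV,
    lintegral_withDensity_eq_lintegral_mul _ (measurable_gaussianPDF 0 V) (by fun_prop)]
  simp only [Pi.mul_apply, gaussianPDF, ← ENNReal.ofReal_mul (gaussianPDFReal_nonneg _ _ _),
    gaussianPDFReal_mul_exp_mul_sq hV ht, ENNReal.ofReal_mul (inv_nonneg.2 (sqrt_nonneg _))]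
  rw [lintegral_const_mul' _ _ ENNReal.ofReal_ne_top, ← gaussianPDF_def,
    lintegral_gaussianPDF_eq_one _ hW, mul_one]

lemma inv_sqrt_one_sub_le_exp {s : ℝ} (hs : s ≤ 1 / 2) : (√(1 - s))⁻¹ ≤ exp (s / 2 + s ^ 2) := by
  have h1 : 0 < 1 - s := by linarith
  have hsq : (1 - s)⁻¹ ≤ exp (s / 2 + s ^ 2) ^ 2 := by
    rw [sq, ← Real.exp_add, inv_le_iff_one_le_mul₀' h1]
    calc (1 : ℝ) ≤ (1 - s) * (s + 2 * s ^ 2 + 1) := by nlinarith [sq_nonneg s]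
      _ ≤ (1 - s) * exp (s + 2 * s ^ 2) := by gcongr; exact add_one_le_exp _
      _ = (1 - s) * exp (s / 2 + s ^ 2 + (s / 2 + s ^ 2)) := by ring_nf
  rw [← Real.sqrt_inv]
  exact Real.sqrt_le_iff.2 ⟨(exp_pos _).le, hsq⟩

lemma measure_ge_le_exp_mul_lintegral_exp {Ω : Type*} [MeasurableSpace Ω] {P : Measure Ω}
    {f : Ω → ℝ} (hf : AEMeasurable f P) (e : ℝ) :
    P {ω | e ≤ f ω} ≤ ENNReal.ofReal (exp (-e)) * ∫⁻ ω, ENNReal.ofReal (exp (f ω)) ∂P := by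
  have hcancel : ENNReal.ofReal (exp (-e)) * ENNReal.ofReal (exp e) = 1 := by
    rw [← ENNReal.ofReal_mul (exp_pos _).le, ← Real.exp_add, neg_add_cancel, exp_zero,
      ENNReal.ofReal_one]
  calc P {ω | e ≤ f ω}
      = ENNReal.ofReal (exp (-e)) * (ENNReal.ofReal (exp e) * P {ω | e ≤ f ω}) := by
        rw [← mul_assoc, hcancel, one_mul]
    _ ≤ ENNReal.ofReal (exp (-e)) * (ENNReal.ofReal (exp e) *
          P {ω | ENNReal.ofReal (exp e) ≤ ENNReal.ofReal (exp (f ω))}) := by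
        gcongr
        exact fun hω ↦ ENNReal.ofReal_le_ofReal (exp_le_exp.2 hω)
    _ ≤ _ := by
        gcongr
        exact mul_meas_ge_le_lintegral₀ (by fun_prop) _

section SumOfSquares

variable {Ω ι : Type*} [MeasurableSpace Ω] {P : Measure Ω} [Fintype ι] {Y : ι → Ω → ℝ} {V : ℝ≥0}

lemma lintegral_exp_mul_sum_sq (hY : ∀ i, Measurable (Y i)) (hindep : iIndepFun Y P)
    (hlaw : ∀ i, P.map (Y i) = gaussianReal 0 V) {t : ℝ} (ht : 2 * t * V < 1) :
    ∫⁻ ω, ENNReal.ofReal (exp (t * ∑ i, Y i ω ^ 2)) ∂P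
      = ENNReal.ofReal ((√(1 - 2 * t * V))⁻¹ ^ Fintype.card ι) := by
  have hfactor (ω : Ω) : ENNReal.ofReal (exp (t * ∑ i, Y i ω ^ 2))
      = ∏ i, ENNReal.ofReal (exp (t * Y i ω ^ 2)) := by
    rw [Finset.mul_sum, Real.exp_sum, ENNReal.ofReal_prod_of_nonneg fun i _ ↦ (exp_pos _).le]
  have hrow (i : ι) : ∫⁻ ω, ENNReal.ofReal (exp (t * Y i ω ^ 2)) ∂P
      = ENNReal.ofReal (√(1 - 2 * t * V))⁻¹ := by
    rw [← lintegral_exp_mul_sq_gaussianReal V ht, ← hlaw i, lintegral_map (by fun_prop) (hY i)]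
  simp_rw [hfactor]
  rw [lintegral_prod_eq_prod_lintegral_of_indepFun _
      (fun i ω ↦ ENNReal.ofReal (exp (t * Y i ω ^ 2)))
      (hindep.comp (fun _ u ↦ ENNReal.ofReal (exp (t * u ^ 2))) fun _ ↦ by fun_prop)
      (fun i ↦ by fun_prop)]
  simp only [hrow, Finset.prod_const, Finset.card_univ,
    ENNReal.ofReal_pow (inv_nonneg.2 (sqrt_nonneg _))]

lemma measure_mul_le_mul_sum_sq_le (hY : ∀ i, Measurable (Y i)) (hindep : iIndepFun Y P)
    (hlaw : ∀ i, P.map (Y i) = gaussianReal 0 V) (hV : V ≠ 0) {s : ℝ} (hs : s ≤ 1 / 2) :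
    P {ω | s * ((1 + 4 * s) * (Fintype.card ι * V)) ≤ s * ∑ i, Y i ω ^ 2}
      ≤ ENNReal.ofReal (exp (-(Fintype.card ι * s ^ 2))) := by
  -- `s > 0` gives the upper tail of `∑ Yᵢ²` and `s < 0` the lower one; Chernoff's bound is
  -- applied with `t = s / (2V)`, so that the moment generating function is `(1 - s)^(-n/2)`.
  have hV' : (0 : ℝ) < V := by positivity
  set a : ℝ := (1 + 4 * s) * (Fintype.card ι * V)
  set t : ℝ := s / (2 * V)
  have h2tV : 2 * t * V = s := by simp only [t]; field_simp
  calc P {ω | s * a ≤ s * ∑ i, Y i ω ^ 2}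
      ≤ P {ω | t * a ≤ t * ∑ i, Y i ω ^ 2} := by
        refine measure_mono fun ω (hω : s * a ≤ _) ↦ ?_
        have := div_le_div_of_nonneg_right hω (by positivity : (0 : ℝ) ≤ 2 * V)
        simp only [Set.mem_ofPred_eq, t]
        rwa [div_mul_eq_mul_div, div_mul_eq_mul_div]
    _ ≤ ENNReal.ofReal (exp (-(t * a))) *
          ∫⁻ ω, ENNReal.ofReal (exp (t * ∑ i, Y i ω ^ 2)) ∂P :=
        measure_ge_le_exp_mul_lintegral_exp (by fun_prop) _
    _ = ENNReal.ofReal (exp (-(t * a)) * (√(1 - s))⁻¹ ^ Fintype.card ι) := by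
        rw [lintegral_exp_mul_sum_sq hY hindep hlaw (by linarith), h2tV,
          ENNReal.ofReal_mul (exp_pos _).le]
    _ ≤ ENNReal.ofReal (exp (-(Fintype.card ι * s ^ 2))) := by
        refine ENNReal.ofReal_le_ofReal ?_
        calc exp (-(t * a)) * (√(1 - s))⁻¹ ^ Fintype.card ι
            ≤ exp (-(t * a)) * exp (s / 2 + s ^ 2) ^ Fintype.card ι := by
              gcongr
              exact inv_sqrt_one_sub_le_exp hs
          _ = exp (-(Fintype.card ι * s ^ 2)) := by
              rw [← Real.exp_nat_mul, ← Real.exp_add]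
              congr 1
              simp only [t, a]
              field_simp
              ring

lemma ofReal_one_sub_le_measure_abs_sum_sq_sub_le (hY : ∀ i, Measurable (Y i))
    (hindep : iIndepFun Y P) (hlaw : ∀ i, P.map (Y i) = gaussianReal 0 V) (hV : V ≠ 0)
    {ε : ℝ} (hε0 : 0 ≤ ε) (hε2 : ε ≤ 2) :
    ENNReal.ofReal (1 - 2 * exp (-(Fintype.card ι * ε ^ 2 / 16)))
      ≤ P {ω | |∑ i, Y i ω ^ 2 - Fintype.card ι * V| ≤ ε * (Fintype.card ι * V)} := by
  have := hindep.isProbabilityMeasure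
  set a : ℝ := Fintype.card ι * V
  set good := {ω | |∑ i, Y i ω ^ 2 - a| ≤ ε * a}
  have hbad : goodᶜ ⊆ {ω | ε / 4 * ((1 + 4 * (ε / 4)) * a) ≤ ε / 4 * ∑ i, Y i ω ^ 2} ∪
      {ω | -(ε / 4) * ((1 + 4 * -(ε / 4)) * a) ≤ -(ε / 4) * ∑ i, Y i ω ^ 2} := by
    intro ω hω
    simp only [good, Set.mem_compl_iff, Set.mem_ofPred_eq, not_le] at hω
    rcases lt_abs.1 hω with hup | hlow
    · left
      have h : (1 + 4 * (ε / 4)) * a ≤ ∑ i, Y i ω ^ 2 := by linarith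
      exact mul_le_mul_of_nonneg_left h (by positivity)
    · right
      have h : ∑ i, Y i ω ^ 2 ≤ (1 + 4 * -(ε / 4)) * a := by linarith
      exact mul_le_mul_of_nonpos_left h (by linarith)
  have hbad_le : P goodᶜ ≤ ENNReal.ofReal (2 * exp (-(Fintype.card ι * ε ^ 2 / 16))) := by
    calc P goodᶜ
        ≤ ENNReal.ofReal (exp (-(Fintype.card ι * (ε / 4) ^ 2)))
          + ENNReal.ofReal (exp (-(Fintype.card ι * (-(ε / 4)) ^ 2))) :=
          (measure_mono hbad).trans <| (measure_union_le _ _).trans <| add_le_add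
            (measure_mul_le_mul_sum_sq_le hY hindep hlaw hV (by linarith))
            (measure_mul_le_mul_sum_sq_le hY hindep hlaw hV (by linarith))
      _ = ENNReal.ofReal (2 * exp (-(Fintype.card ι * ε ^ 2 / 16))) := by
          rw [← ENNReal.ofReal_add (exp_pos _).le (exp_pos _).le]
          ring_nf
  calc ENNReal.ofReal (1 - 2 * exp (-(Fintype.card ι * ε ^ 2 / 16)))
      = 1 - ENNReal.ofReal (2 * exp (-(Fintype.card ι * ε ^ 2 / 16))) := by
        rw [ENNReal.ofReal_sub _ (by positivity), ENNReal.ofReal_one]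
    _ ≤ 1 - P goodᶜ := tsub_le_tsub_left hbad_le 1
    _ ≤ P good := by
        rw [tsub_le_iff_right, ← measure_univ (μ := P)]
        exact measure_univ_le_add_compl good

end SumOfSquares

lemma euclNorm_sq {d : ℕ} (x : Fin d → ℝ) : euclNorm x ^ 2 = ∑ i, x i ^ 2 :=
  Real.sq_sqrt (by positivity)

section GaussianMatrix

variable {m d : ℕ}

noncomputable def gaussianMatrix (m d : ℕ) : Measure (Fin m → Fin d → ℝ) :=
  Measure.pi fun _ ↦ Measure.pi fun _ ↦ gaussianReal 0 (m : ℝ≥0)⁻¹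

instance : IsProbabilityMeasure (gaussianMatrix m d) := by
  unfold gaussianMatrix
  infer_instance

lemma continuous_dotProduct_const {ι : Type*} [Fintype ι] (x : ι → ℝ) :
    Continuous (· ⬝ᵥ x) :=
  continuous_id.dotProduct continuous_const

lemma iIndepFun_gaussianMatrix_dotProduct (x : Fin d → ℝ) :
    iIndepFun (fun i (A : Fin m → Fin d → ℝ) ↦ A i ⬝ᵥ x) (gaussianMatrix m d) :=
  iIndepFun_pi fun _ ↦ (continuous_dotProduct_const x).measurable.aemeasurable

lemma gaussianMatrix_map_dotProduct (x : Fin d → ℝ) (i : Fin m) :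
    (gaussianMatrix m d).map (fun A ↦ A i ⬝ᵥ x)
      = gaussianReal 0 ((∑ j, x j ^ 2).toNNReal * (m : ℝ≥0)⁻¹) := by
  calc (gaussianMatrix m d).map (fun A ↦ A i ⬝ᵥ x)
      = ((gaussianMatrix m d).map (Function.eval i)).map (· ⬝ᵥ x) := by
        rw [Measure.map_map (continuous_dotProduct_const x).measurable (measurable_pi_apply i)]
        rfl
    _ = _ := by
        rw [gaussianMatrix, (measurePreserving_eval _ i).map_eq, map_dotProduct_pi_gaussianReal]

lemma ofReal_one_sub_le_gaussianMatrix (hm : 0 < m) (x : Fin d → ℝ) {ε : ℝ} (hε0 : 0 ≤ ε)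
    (hε2 : ε ≤ 2) :
    ENNReal.ofReal (1 - 2 * exp (-(m * ε ^ 2 / 16))) ≤ gaussianMatrix m d
      {A | |euclNorm ((Matrix.of A).mulVec x) ^ 2 - euclNorm x ^ 2| ≤ ε * euclNorm x ^ 2} := by
  rcases eq_or_ne x 0 with rfl | hx
  · simpa [euclNorm] using (exp_pos _).le
  have hK : 0 < ∑ j, x j ^ 2 := by
    obtain ⟨j, hj : x j ≠ 0⟩ := Function.ne_iff.1 hx
    exact Finset.sum_pos' (fun j _ ↦ sq_nonneg (x j)) ⟨j, Finset.mem_univ j, by positivity⟩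
  have hV : (∑ j, x j ^ 2).toNNReal * (m : ℝ≥0)⁻¹ ≠ 0 :=
    mul_ne_zero (Real.toNNReal_pos.2 hK).ne' (inv_ne_zero (Nat.cast_ne_zero.2 hm.ne'))
  have hmV : (Fintype.card (Fin m) : ℝ) * ((∑ j, x j ^ 2).toNNReal * (m : ℝ≥0)⁻¹ : ℝ≥0)
      = euclNorm x ^ 2 := by
    rw [Fintype.card_fin, NNReal.coe_mul, Real.coe_toNNReal _ hK.le, NNReal.coe_inv,
      NNReal.coe_natCast, euclNorm_sq]
    field_simp
  have hconc := ofReal_one_sub_le_measure_abs_sum_sq_sub_le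
    (fun i ↦ (continuous_dotProduct_const x).measurable.comp (measurable_pi_apply i))
    (iIndepFun_gaussianMatrix_dotProduct x) (gaussianMatrix_map_dotProduct x) hV hε0 hε2
  rw [hmV, Fintype.card_fin] at hconc
  refine hconc.trans_eq (congr_arg _ (Set.ext fun A ↦ ?_))
  rw [Set.mem_ofPred_eq, Set.mem_ofPred_eq, euclNorm_sq (Matrix.of A *ᵥ x)]
  rfl

end GaussianMatrix

/-- **Johnson–Lindenstrauss lemma.**  There is a universal constant `c > 0` such that for all
positive integers `m`, `d` and all `δ ∈ (0, 1/2)` there is a probability distribution on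
`m × d` real matrices such that for every fixed `x ∈ ℝ^d`, with probability at least `1 - δ`,
`|‖Ax‖₂² - ‖x‖₂²| ≤ c √(log(1/δ)/m) ‖x‖₂²`. -/
theorem jl_lemma :
    ∃ c : ℝ, 0 < c ∧
      ∀ (m d : ℕ), 0 < m → 0 < d → ∀ δ : ℝ, 0 < δ → δ < 1 / 2 →
        ∃ μ : Measure (Fin m → Fin d → ℝ), IsProbabilityMeasure μ ∧
          ∀ x : Fin d → ℝ,
            ENNReal.ofReal (1 - δ) ≤
              μ {A | |euclNorm ((Matrix.of A).mulVec x) ^ 2 - euclNorm x ^ 2| ≤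
                  c * Real.sqrt (Real.log (1 / δ) / m) * euclNorm x ^ 2} := by
  refine ⟨8, by norm_num, fun m d hm _ δ hδ0 hδ2 ↦ ?_⟩
  set ε := 8 * √(log (1 / δ) / m) with hε
  rcases le_or_gt 1 ε with hε1 | hε1
  · refine ⟨Measure.dirac 0, inferInstance, fun x ↦ ?_⟩
    rw [Measure.dirac_apply_of_mem]
    · exact ENNReal.ofReal_le_one.2 (by linarith)
    · simpa [euclNorm] using le_mul_of_one_le_left (sq_nonneg (euclNorm x)) hε1
  have hexp : exp (-(m * ε ^ 2 / 16)) = δ ^ 4 := by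
    have hlog : 0 ≤ log (1 / δ) := Real.log_nonneg (by rw [le_div_iff₀ hδ0]; linarith)
    rw [hε, mul_pow, Real.sq_sqrt (by positivity), one_div, Real.log_inv,
      ← Real.exp_log (pow_pos hδ0 4), Real.log_pow]
    congr 1
    field_simp
    ring
  refine ⟨gaussianMatrix m d, inferInstance, fun x ↦ ?_⟩
  calc ENNReal.ofReal (1 - δ) ≤ ENNReal.ofReal (1 - 2 * exp (-(m * ε ^ 2 / 16))) := by
        rw [hexp]
        exact ENNReal.ofReal_le_ofReal (by nlinarith [pow_le_pow_left₀ hδ0.le hδ2.le 3])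
    _ ≤ _ := ofReal_one_sub_le_gaussianMatrix hm x (by positivity) (by linarith)
end

section
/- Let ℓ_1, …, ℓ_n : ℝ → ℝ be convex, G-Lipschitz loss functions, let x_1, …, x_n ∈ ℝ^d with data matrix X = (x_1, …, x_n) ∈ ℝ^{d×n}, let λ > 0, and define F(w) = (1/n)·Σ_{i=1}^n ℓ_i(wᵀx_i) + (λ/2)‖w‖₂². Let Y ∈ ℝ^{d×m} be any matrix, let P_Y denote the orthogonal projection of ℝ^d onto the column space of Y, let w_n be a global minimizer of F over ℝ^d, and let ŵ_n be a minimizer of F over the column space of Y (i.e., over {w ∈ ℝ^d : P_Y w = w}). Then F(ŵ_n) ≤ F(w_n) + (G²/(2λn))·‖X − P_Y X‖₂². -/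
open MeasureTheory Matrix Finset

/-- The spectral norm (largest singular value) of a real matrix, i.e. its ℓ₂→ℓ₂ operator norm. -/
noncomputable def specNorm {p q : ℕ} (M : Matrix (Fin p) (Fin q) ℝ) : ℝ :=
  ‖LinearMap.toContinuousLinearMap (Matrix.toEuclideanLin M)‖

/-- `P` is the orthogonal projection of `ℝ^d` onto the column space of `Y`. -/
def IsProjOntoColSpace {d m : ℕ} (P : Matrix (Fin d) (Fin d) ℝ)
    (Y : Matrix (Fin d) (Fin m) ℝ) : Prop :=
  P.IsSymm ∧ P * P = P ∧ LinearMap.range P.mulVecLin = LinearMap.range Y.mulVecLin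

/-- `f` is `G`-Lipschitz: `|f z - f z'| ≤ G |z - z'|` for all `z, z'`. -/
def LipschitzCst (G : ℝ) (f : ℝ → ℝ) : Prop := ∀ z z', |f z - f z'| ≤ G * |z - z'|

/-- The Euclidean inner product `wᵀx`. -/
def dotp {d : ℕ} (w x : Fin d → ℝ) : ℝ := ∑ i, w i * x i

/-!
`P w_n` lies in the column space of `Y`, so it suffices to bound `F(P w_n) - F(w_n)`. Put
`u = P w_n - w_n`. By Pythagoras the ridge term of `F(P w_n)` is smaller by `λ‖u‖²/2`. Each loss
moves by at most `G |(Xᵀu)ᵢ|`, and since `P` is symmetric with `P u = 0`, `Xᵀu = (X - P X)ᵀu`;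
by Cauchy–Schwarz the average loss thus grows by at most `G s ‖u‖ / √n` with `s = ‖X - P X‖₂`.
Maximizing `G s t / √n - λ t² / 2` over `t` gives `G² s² / (2 λ n)`.
-/

open scoped Matrix.Norms.L2Operator

lemma specNorm_eq_l2_opNorm {p q : ℕ} (M : Matrix (Fin p) (Fin q) ℝ) : specNorm M = ‖M‖ := rfl

lemma specNorm_transpose {p q : ℕ} (M : Matrix (Fin p) (Fin q) ℝ) : specNorm Mᵀ = specNorm M := by
  rw [specNorm_eq_l2_opNorm, specNorm_eq_l2_opNorm, ← conjTranspose_eq_transpose_of_trivial,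
    l2_opNorm_conjTranspose]

lemma euclNorm_eq_norm_toLp {p : ℕ} (v : Fin p → ℝ) : euclNorm v = ‖WithLp.toLp 2 v‖ := by
  simp [EuclideanSpace.norm_eq, euclNorm]

lemma sq_euclNorm {p : ℕ} (v : Fin p → ℝ) : euclNorm v ^ 2 = v ⬝ᵥ v := by
  rw [euclNorm, Real.sq_sqrt (by positivity)]
  simp [dotProduct, sq]

lemma euclNorm_mulVec_le {p q : ℕ} (M : Matrix (Fin p) (Fin q) ℝ) (v : Fin q → ℝ) :
    euclNorm (M *ᵥ v) ≤ specNorm M * euclNorm v := by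
  rw [euclNorm_eq_norm_toLp, euclNorm_eq_norm_toLp]
  exact l2_opNorm_mulVec M (WithLp.toLp 2 v)

lemma LipschitzCst.sub_le {G : ℝ} {f : ℝ → ℝ} (hf : LipschitzCst G f) (a b : ℝ) :
    f a - f b ≤ G * |a - b| :=
  (le_abs_self _).trans (hf a b)

lemma sum_sub_sum_le_of_lipschitzCst {n : ℕ} {G : ℝ} {ℓ : Fin n → ℝ → ℝ}
    (hlip : ∀ i, LipschitzCst G (ℓ i)) (a b : Fin n → ℝ) :
    ∑ i, ℓ i (a i) - ∑ i, ℓ i (b i) ≤ |G| * √n * euclNorm (a - b) := by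
  calc ∑ i, ℓ i (a i) - ∑ i, ℓ i (b i) = ∑ i, (ℓ i (a i) - ℓ i (b i)) := by
        rw [Finset.sum_sub_distrib]
    _ ≤ ∑ i, G * |a i - b i| := Finset.sum_le_sum fun i _ => (hlip i).sub_le _ _
    _ ≤ √(∑ _i : Fin n, G ^ 2) * √(∑ i, |a i - b i| ^ 2) :=
        Real.sum_mul_le_sqrt_mul_sqrt _ _ _
    _ = |G| * √n * euclNorm (a - b) := by
        rw [Finset.sum_const, Finset.card_univ, Fintype.card_fin, nsmul_eq_mul,
          Real.sqrt_mul (Nat.cast_nonneg _), Real.sqrt_sq_eq_abs]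
        simp only [euclNorm, sq_abs, Pi.sub_apply]
        ring

lemma mul_sub_half_mul_sq_le {lam : ℝ} (hlam : 0 < lam) (c t : ℝ) :
    c * t - lam / 2 * t ^ 2 ≤ c ^ 2 / (2 * lam) := by
  rw [le_div_iff₀ (by positivity)]
  nlinarith [sq_nonneg (c - lam * t)]

section Projection

variable {d : ℕ} {P : Matrix (Fin d) (Fin d) ℝ}

lemma mulVec_mulVec_sub_self (hPP : P * P = P) (w : Fin d → ℝ) : P *ᵥ (P *ᵥ w - w) = 0 := by
  rw [mulVec_sub, mulVec_mulVec, hPP, sub_self]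

lemma sq_euclNorm_eq_add_of_isSymm_of_idem (hP : P.IsSymm) (hPP : P * P = P)
    (w : Fin d → ℝ) : euclNorm w ^ 2 = euclNorm (P *ᵥ w) ^ 2 + euclNorm (P *ᵥ w - w) ^ 2 := by
  have horth : (P *ᵥ w) ⬝ᵥ (P *ᵥ w - w) = 0 := by
    have hself : (P *ᵥ w) ⬝ᵥ (P *ᵥ w - w) = w ⬝ᵥ (P *ᵥ (P *ᵥ w - w)) := by
      rw [dotProduct_mulVec, ← mulVec_transpose, hP.eq]
    rw [hself, mulVec_mulVec_sub_self hPP, dotProduct_zero]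
  simp only [sq_euclNorm, dotProduct_sub, sub_dotProduct] at horth ⊢
  rw [dotProduct_comm (P *ᵥ w) w] at horth ⊢
  linarith

lemma transpose_mulVec_mulVec_sub_self {n : ℕ} (hP : P.IsSymm) (hPP : P * P = P)
    (X : Matrix (Fin d) (Fin n) ℝ) (w : Fin d → ℝ) :
    Xᵀ *ᵥ (P *ᵥ w - w) = (X - P * X)ᵀ *ᵥ (P *ᵥ w - w) := by
  rw [transpose_sub, transpose_mul, hP.eq, sub_mulVec, ← mulVec_mulVec,
    mulVec_mulVec_sub_self hPP, mulVec_zero, sub_zero]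

end Projection

/-- The objective `F` of the paper, with the data points `xᵢ` the columns of `X`. -/
noncomputable def regRisk {d n : ℕ} (ℓ : Fin n → ℝ → ℝ) (lam : ℝ) (X : Matrix (Fin d) (Fin n) ℝ)
    (w : Fin d → ℝ) : ℝ :=
  (1 / (n : ℝ)) * ∑ i, ℓ i ((Xᵀ *ᵥ w) i) + lam / 2 * euclNorm w ^ 2

lemma dotp_eq_transpose_mulVec {d n : ℕ} {x : Fin n → Fin d → ℝ} {X : Matrix (Fin d) (Fin n) ℝ}
    (hX : ∀ i j, X i j = x j i) (w : Fin d → ℝ) (j : Fin n) : dotp w (x j) = (Xᵀ *ᵥ w) j := by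
  simp [dotp, mulVec, dotProduct, hX, mul_comm]

lemma regRisk_mulVec_le {d n : ℕ} {G lam : ℝ} (hlam : 0 < lam) {ℓ : Fin n → ℝ → ℝ}
    (hlip : ∀ i, LipschitzCst G (ℓ i)) (X : Matrix (Fin d) (Fin n) ℝ)
    {P : Matrix (Fin d) (Fin d) ℝ} (hP : P.IsSymm) (hPP : P * P = P) (w : Fin d → ℝ) :
    regRisk ℓ lam X (P *ᵥ w) ≤
      regRisk ℓ lam X w + G ^ 2 / (2 * lam * n) * specNorm (X - P * X) ^ 2 := by
  have hpyth := sq_euclNorm_eq_add_of_isSymm_of_idem hP hPP w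
  set u := P *ᵥ w - w
  set s := specNorm (X - P * X)
  have hloss : ∑ i, ℓ i ((Xᵀ *ᵥ (P *ᵥ w)) i) - ∑ i, ℓ i ((Xᵀ *ᵥ w) i) ≤
      |G| * √n * (s * euclNorm u) :=
    calc _ ≤ |G| * √n * euclNorm (Xᵀ *ᵥ (P *ᵥ w) - Xᵀ *ᵥ w) :=
          sum_sub_sum_le_of_lipschitzCst hlip _ _
      _ = |G| * √n * euclNorm ((X - P * X)ᵀ *ᵥ u) := by
          rw [← mulVec_sub, transpose_mulVec_mulVec_sub_self hP hPP]
      _ ≤ |G| * √n * (s * euclNorm u) := by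
          gcongr
          simpa only [specNorm_transpose] using euclNorm_mulVec_le (X - P * X)ᵀ u
  have hcoef : 1 / (n : ℝ) * (|G| * √n * (s * euclNorm u)) = |G| * s / √n * euclNorm u := by
    calc _ = |G| * s * euclNorm u * (√n / n) := by ring
      _ = |G| * s / √n * euclNorm u := by rw [Real.sqrt_div_self']; ring
  have hbound : (|G| * s / √n) ^ 2 / (2 * lam) = G ^ 2 / (2 * lam * n) * s ^ 2 := by
    rw [div_pow, mul_pow, sq_abs, Real.sq_sqrt (Nat.cast_nonneg _)]
    ring
  have hamgm := mul_sub_half_mul_sq_le hlam (|G| * s / √n) (euclNorm u)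
  have hscaled := mul_le_mul_of_nonneg_left hloss (by positivity : (0 : ℝ) ≤ 1 / (n : ℝ))
  unfold regRisk
  rw [hpyth]
  linarith

theorem erm_subspace_optimization_error_general {d n m : ℕ} (G lam : ℝ) (hlam : 0 < lam)
    (ℓ : Fin n → ℝ → ℝ)
    (hlip : ∀ i, LipschitzCst G (ℓ i))
    (x : Fin n → Fin d → ℝ)
    (X : Matrix (Fin d) (Fin n) ℝ) (hX : ∀ i j, X i j = x j i)
    (F : (Fin d → ℝ) → ℝ)
    (hF : ∀ w, F w = (1 / (n : ℝ)) * ∑ i, ℓ i (dotp w (x i)) + lam / 2 * euclNorm w ^ 2)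
    (Y : Matrix (Fin d) (Fin m) ℝ) (Pm : Matrix (Fin d) (Fin d) ℝ)
    (hP : IsProjOntoColSpace Pm Y)
    (wn : Fin d → ℝ)
    (whn : Fin d → ℝ)
    (hwhn : ∀ w, Pm.mulVec w = w → F whn ≤ F w) :
    F whn ≤ F wn + G ^ 2 / (2 * lam * n) * specNorm (X - Pm * X) ^ 2 := by
  obtain ⟨hsymm, hPP, -⟩ := hP
  have hF_eq : ∀ w, F w = regRisk ℓ lam X w := fun w => by
    simp only [hF, regRisk, dotp_eq_transpose_mulVec hX]
  calc F whn ≤ F (Pm *ᵥ wn) := hwhn _ (by rw [mulVec_mulVec, hPP])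
    _ ≤ F wn + G ^ 2 / (2 * lam * n) * specNorm (X - Pm * X) ^ 2 := by
      rw [hF_eq, hF_eq]
      exact regRisk_mulVec_le hlam hlip X hsymm hPP wn

/-- **Lemma 2** of the paper: if `ŵ_n` minimizes the regularized empirical risk `F` over the
column space of `Y` and `w_n` minimizes `F` over `ℝ^d`, then
`F(ŵ_n) ≤ F(w_n) + G²/(2λn) ‖X − P_Y X‖₂²`. -/
theorem erm_subspace_optimization_error {d n m : ℕ} (hn : 0 < n) (G lam : ℝ) (hlam : 0 < lam)
    (ℓ : Fin n → ℝ → ℝ)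
    (hconv : ∀ i, ConvexOn ℝ Set.univ (ℓ i))
    (hlip : ∀ i, LipschitzCst G (ℓ i))
    (x : Fin n → Fin d → ℝ)
    (X : Matrix (Fin d) (Fin n) ℝ) (hX : ∀ i j, X i j = x j i)
    (F : (Fin d → ℝ) → ℝ)
    (hF : ∀ w, F w = (1 / (n : ℝ)) * ∑ i, ℓ i (dotp w (x i)) + lam / 2 * euclNorm w ^ 2)
    (Y : Matrix (Fin d) (Fin m) ℝ) (Pm : Matrix (Fin d) (Fin d) ℝ)
    (hP : IsProjOntoColSpace Pm Y)
    (wn : Fin d → ℝ) (hwn : ∀ w, F wn ≤ F w)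
    (whn : Fin d → ℝ) (hmem : Pm.mulVec whn = whn)
    (hwhn : ∀ w, Pm.mulVec w = w → F whn ≤ F w) :
    F whn ≤ F wn + G ^ 2 / (2 * lam * n) * specNorm (X - Pm * X) ^ 2 :=
  erm_subspace_optimization_error_general G lam hlam ℓ hlip x X hX F hF Y Pm hP wn whn hwhn
end
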